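/- arXiv:2501.12717 — 6 statements merged into one kernel-verified Lean document; each statement's English description precedes it below -/
import Mathlib

section
/- Let u ≠ v in ℝ^n, w = (u+v)/2, and let (w_k) be a sequence converging to w with w_k ∉ [u,v] for all k. Suppose (B_k) is a sequence of closed Euclidean balls with centers c_k and radii r_k such that [u,v] ⊆ B_k and ‖w_k - c_k‖ ≥ r_k for all k. Then ‖c_k‖ → ∞. -/
/-- If `u ≠ v`, `w` is their midpoint, `w_k → w` with `w_k ∉ [u,v]`, and closed Euclidean
balls `B_k` (centers `c_k`, radii `r_k`) contain `[u,v]` while `‖w_k - c_k‖ ≥ r_k`, then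
`‖c_k‖ → ∞`. -/
theorem stmt4 (n : ℕ) (u v : EuclideanSpace ℝ (Fin n)) (huv : u ≠ v)
    (w : EuclideanSpace ℝ (Fin n)) (hw : w = (2⁻¹ : ℝ) • u + (2⁻¹ : ℝ) • v)
    (wk : ℕ → EuclideanSpace ℝ (Fin n))
    (hwk : Filter.Tendsto wk Filter.atTop (nhds w))
    (hnot : ∀ k, wk k ∉ segment ℝ u v)
    (c : ℕ → EuclideanSpace ℝ (Fin n)) (r : ℕ → ℝ)
    (hball : ∀ k, ∀ p ∈ segment ℝ u v, ‖p - c k‖ ≤ r k)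
    (hout : ∀ k, r k ≤ ‖wk k - c k‖) :
    Filter.Tendsto (fun k => ‖c k‖) Filter.atTop Filter.atTop := by
  have hε0 : Filter.Tendsto (fun k => ‖wk k - w‖) Filter.atTop (nhds 0) :=
    tendsto_iff_norm_sub_tendsto_zero.mp hwk
  have hs : (0:ℝ) < ‖u - v‖ := norm_pos_iff.mpr (sub_ne_zero.mpr huv)
  set s := ‖u - v‖ with hsdef
  have key : ∀ k, s^2 ≤ 8 * ‖wk k - w‖ * ‖w - c k‖ + 4 * ‖wk k - w‖^2 := by
    intro k
    have h1 : ‖u - c k‖ ≤ r k := hball k u (left_mem_segment ℝ u v)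
    have h2 : ‖v - c k‖ ≤ r k := hball k v (right_mem_segment ℝ u v)
    have h3 : r k ≤ ‖wk k - c k‖ := hout k
    have h4 : ‖wk k - c k‖ ≤ ‖wk k - w‖ + ‖w - c k‖ := norm_sub_le_norm_sub_add_norm_sub _ _ _
    have hpar := parallelogram_law_with_norm ℝ (u - c k) (v - c k)
    have hsum : (u - c k) + (v - c k) = (2:ℝ) • (w - c k) := by
      rw [hw]; module
    have hdiff : (u - c k) - (v - c k) = u - v := by abel
    rw [hsum, hdiff] at hpar
    have h2n : ‖(2:ℝ) • (w - c k)‖ = 2 * ‖w - c k‖ := by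
      rw [norm_smul]; simp
    rw [h2n] at hpar
    nlinarith [norm_nonneg (u - c k), norm_nonneg (v - c k), norm_nonneg (w - c k),
      norm_nonneg (wk k - w), norm_nonneg (wk k - c k)]
  have hD : Filter.Tendsto (fun k => ‖w - c k‖) Filter.atTop Filter.atTop := by
    rw [Filter.tendsto_atTop]
    intro M
    set M' := max M 1 with hM'def
    have hM' : (0:ℝ) < M' := lt_of_lt_of_le one_pos (le_max_right _ _)
    have hδ : (0:ℝ) < min (s/4) (s^2/(32*M')) := by positivity
    obtain ⟨N, hN⟩ := Metric.tendsto_atTop.mp hε0 (min (s/4) (s^2/(32*M'))) hδ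
    refine Filter.eventually_atTop.mpr ⟨N, fun k hk => ?_⟩
    have hεlt := hN k hk
    rw [Real.dist_eq, sub_zero, abs_of_nonneg (norm_nonneg _)] at hεlt
    have hε1 : ‖wk k - w‖ < s/4 := lt_of_lt_of_le hεlt (min_le_left _ _)
    have hε2 : ‖wk k - w‖ < s^2/(32*M') := lt_of_lt_of_le hεlt (min_le_right _ _)
    have hε2' : ‖wk k - w‖ * (32*M') < s^2 :=
      (lt_div_iff₀ (by positivity)).mp hε2
    by_contra hcon
    push_neg at hcon
    have hMM' : M ≤ M' := le_max_left _ _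
    have hD0 : (0:ℝ) ≤ ‖w - c k‖ := norm_nonneg _
    have hε0' : (0:ℝ) ≤ ‖wk k - w‖ := norm_nonneg _
    nlinarith [key k, mul_nonneg hε0' hD0, mul_le_mul_of_nonneg_left hcon.le hε0',
      mul_le_mul_of_nonneg_left hε1.le hε0']
  have hlb : ∀ k, ‖w - c k‖ + -‖w‖ ≤ ‖c k‖ := by
    intro k
    have := norm_sub_le w (c k)
    linarith
  exact Filter.tendsto_atTop_mono hlb
    (Filter.tendsto_atTop_add_const_right _ _ hD)
end

section
/- Let u ≠ v in ℝ^n, w = (u+v)/2, and suppose closed Euclidean balls B_k with centers c_k and radii r_k satisfy [u,v] ⊆ B_k and ‖w_k - c_k‖ ≥ r_k for a sequence w_k → w. Then r_k → ∞. -/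
set_option maxHeartbeats 800000 in
/-- If `u ≠ v`, `w` is their midpoint, `w_k → w`, and closed Euclidean balls `B_k`
(centers `c_k`, radii `r_k`) contain `[u,v]` while `‖w_k - c_k‖ ≥ r_k`, then `r_k → ∞`. -/
theorem stmt5 (n : ℕ) (u v : EuclideanSpace ℝ (Fin n)) (huv : u ≠ v)
    (w : EuclideanSpace ℝ (Fin n)) (hw : w = (2⁻¹ : ℝ) • u + (2⁻¹ : ℝ) • v)
    (wk : ℕ → EuclideanSpace ℝ (Fin n))
    (hwk : Filter.Tendsto wk Filter.atTop (nhds w))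
    (c : ℕ → EuclideanSpace ℝ (Fin n)) (r : ℕ → ℝ)
    (hball : ∀ k, ∀ p ∈ segment ℝ u v, ‖p - c k‖ ≤ r k)
    (hout : ∀ k, r k ≤ ‖wk k - c k‖) :
    Filter.Tendsto r Filter.atTop Filter.atTop := by
  have hd : (0:ℝ) < ‖u - v‖ := by
    simpa using sub_ne_zero.mpr huv
  set d := ‖u - v‖ with hddef
  rw [Filter.tendsto_atTop]
  intro M
  set M' := max M 1 with hM'
  have hM'pos : (0:ℝ) < M' := lt_of_lt_of_le one_pos (le_max_right _ _)
  set ε := min (d/4) (d^2/(8*M')) with hε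
  have hεpos : 0 < ε := lt_min (by positivity) (by positivity)
  have hev := (Metric.tendsto_nhds.mp hwk) ε hεpos
  filter_upwards [hev] with k hk
  have hu : ‖u - c k‖ ≤ r k := hball k u (left_mem_segment ℝ u v)
  have hv : ‖v - c k‖ ≤ r k := hball k v (right_mem_segment ℝ u v)
  have hr2 : d ≤ 2 * r k := by
    calc d = ‖(u - c k) - (v - c k)‖ := by rw [sub_sub_sub_cancel_right]
    _ ≤ ‖u - c k‖ + ‖v - c k‖ := norm_sub_le _ _
    _ ≤ 2 * r k := by linarith
  have hwc : r k - ε ≤ ‖w - c k‖ := by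
    have h1 : r k ≤ ‖wk k - c k‖ := hout k
    have h2 : ‖wk k - c k‖ ≤ ‖wk k - w‖ + ‖w - c k‖ := by
      have := dist_triangle (wk k) w (c k)
      simpa [dist_eq_norm] using this
    have h3 : ‖wk k - w‖ < ε := by simpa [dist_eq_norm] using hk
    linarith
  have hpar := parallelogram_law_with_norm ℝ (u - c k) (v - c k)
  have h1 : (u - c k) + (v - c k) = (2:ℝ) • (w - c k) := by
    rw [hw]; module
  have hn1 : ‖(u - c k) + (v - c k)‖ = 2 * ‖w - c k‖ := by
    rw [h1, norm_smul]; simp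
  have h2 : (u - c k) - (v - c k) = u - v := by abel
  have key : 4 * ‖w - c k‖^2 + d^2 ≤ 4 * (r k)^2 := by
    rw [hn1, h2] at hpar
    have h1' : 0 ≤ ‖u - c k‖ := norm_nonneg _
    have h2' : 0 ≤ ‖v - c k‖ := norm_nonneg _
    nlinarith [hpar, hu, hv]
  have hεd : ε ≤ d/4 := min_le_left _ _
  have hrε : 0 ≤ r k - ε := by linarith
  have hsq : (r k - ε)^2 ≤ ‖w - c k‖^2 := by
    apply sq_le_sq' <;> nlinarith [norm_nonneg (w - c k)]
  have h8 : 8 * ε * M' ≤ d^2 := by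
    have := min_le_right (d/4) (d^2/(8*M'))
    rw [le_div_iff₀ (by positivity)] at this
    linarith
  have hMM' : M ≤ M' := le_max_left _ _
  have hstep : 8 * ε * M' ≤ 8 * ε * r k := by nlinarith [hsq, key]
  have : M' ≤ r k := le_of_mul_le_mul_left hstep (by positivity)
  linarith
end

section
/- Let C ⊂ ℝ^n be compact and convex, and let sequences (c_k) in ℝ^n, (r_k) in ℝ, (w_k) in ℝ^n satisfy: ‖c_k‖ → ∞, c_k/‖c_k‖ → p, w_k → w̄ ∈ C, and ‖c_k - x‖ ≤ r_k ≤ ‖c_k - w_k‖ for all x ∈ C and all k. Then ⟨x - w̄, p⟩ ≥ 0 for all x ∈ C. -/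
/-!
Expanding the squares, `‖c - x‖ ≤ ‖c - w‖` says `‖x‖² - ‖w‖² ≤ 2 ⟪c, x - w⟫`. Dividing by `‖c_k‖`
and letting `k → ∞`, the left side tends to `0` and the right side to `2 ⟪p, x - w̄⟫`.
-/

open Filter Topology

variable {E : Type*} [NormedAddCommGroup E] [InnerProductSpace ℝ E]

theorem sq_norm_sub_sq_norm_le_two_mul_inner_of_norm_sub_le {c x w : E}
    (h : ‖c - x‖ ≤ ‖c - w‖) : ‖x‖ ^ 2 - ‖w‖ ^ 2 ≤ 2 * inner ℝ c (x - w) := by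
  have hsq : ‖c - x‖ ^ 2 ≤ ‖c - w‖ ^ 2 := pow_le_pow_left₀ (norm_nonneg _) h 2
  rw [norm_sub_sq_real, norm_sub_sq_real] at hsq
  rw [inner_sub_right]
  linarith

theorem inner_sub_nonneg_of_tendsto_normalize {c w : ℕ → E} {p x wbar : E}
    (hc : Tendsto (fun k => ‖c k‖) atTop atTop)
    (hp : Tendsto (fun k => ‖c k‖⁻¹ • c k) atTop (𝓝 p))
    (hw : Tendsto w atTop (𝓝 wbar))
    (hclose : ∀ᶠ k in atTop, ‖c k - x‖ ≤ ‖c k - w k‖) :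
    0 ≤ inner ℝ p (x - wbar) := by
  have hlhs : Tendsto (fun k => ‖c k‖⁻¹ * (‖x‖ ^ 2 - ‖w k‖ ^ 2)) atTop (𝓝 0) := by
    simpa using (tendsto_inv_atTop_zero.comp hc).mul
      (tendsto_const_nhds.sub (hw.norm.pow 2) : Tendsto (fun k => ‖x‖ ^ 2 - ‖w k‖ ^ 2) _ _)
  have hrhs : Tendsto (fun k => 2 * inner ℝ (‖c k‖⁻¹ • c k) (x - w k)) atTop
      (𝓝 (2 * inner ℝ p (x - wbar))) :=
    (hp.inner (tendsto_const_nhds.sub hw)).const_mul 2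
  have hle : ∀ᶠ k in atTop,
      ‖c k‖⁻¹ * (‖x‖ ^ 2 - ‖w k‖ ^ 2) ≤ 2 * inner ℝ (‖c k‖⁻¹ • c k) (x - w k) := by
    filter_upwards [hclose] with k hk
    rw [real_inner_smul_left, mul_left_comm]
    exact mul_le_mul_of_nonneg_left
      (sq_norm_sub_sq_norm_le_two_mul_inner_of_norm_sub_le hk) (inv_nonneg.2 (norm_nonneg _))
  have := le_of_tendsto_of_tendsto hlhs hrhs hle
  linarith

theorem stmt6_general (n : ℕ) (C : Set (EuclideanSpace ℝ (Fin n)))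
    (c w : ℕ → EuclideanSpace ℝ (Fin n)) (r : ℕ → ℝ)
    (p wbar : EuclideanSpace ℝ (Fin n))
    (hc : Filter.Tendsto (fun k => ‖c k‖) Filter.atTop Filter.atTop)
    (hp : Filter.Tendsto (fun k => ‖c k‖⁻¹ • c k) Filter.atTop (nhds p))
    (hw : Filter.Tendsto w Filter.atTop (nhds wbar))
    (h1 : ∀ k, ∀ x ∈ C, ‖c k - x‖ ≤ r k)
    (h2 : ∀ k, r k ≤ ‖c k - w k‖) :
    ∀ x ∈ C, (0 : ℝ) ≤ inner ℝ (x - wbar) p := by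
  intro x hx
  rw [real_inner_comm]
  exact inner_sub_nonneg_of_tendsto_normalize hc hp hw
    (Eventually.of_forall fun k => (h1 k x hx).trans (h2 k))

/-- If `C ⊂ ℝⁿ` is compact convex, `‖c_k‖ → ∞`, `c_k/‖c_k‖ → p`, `w_k → w̄ ∈ C`, and
`‖c_k - x‖ ≤ r_k ≤ ‖c_k - w_k‖` for all `x ∈ C` and all `k`, then `⟨x - w̄, p⟩ ≥ 0`
for all `x ∈ C`. -/
theorem stmt6 (n : ℕ) (C : Set (EuclideanSpace ℝ (Fin n))) (hC : IsCompact C)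
    (hconv : Convex ℝ C)
    (c w : ℕ → EuclideanSpace ℝ (Fin n)) (r : ℕ → ℝ)
    (p wbar : EuclideanSpace ℝ (Fin n))
    (hc : Filter.Tendsto (fun k => ‖c k‖) Filter.atTop Filter.atTop)
    (hp : Filter.Tendsto (fun k => ‖c k‖⁻¹ • c k) Filter.atTop (nhds p))
    (hw : Filter.Tendsto w Filter.atTop (nhds wbar)) (hwbar : wbar ∈ C)
    (h1 : ∀ k, ∀ x ∈ C, ‖c k - x‖ ≤ r k)
    (h2 : ∀ k, r k ≤ ‖c k - w k‖) :
    ∀ x ∈ C, (0 : ℝ) ≤ inner ℝ (x - wbar) p :=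
  stmt6_general n C c w r p wbar hc hp hw h1 h2
end

section
/- Under the same hypotheses (C compact convex, ‖c_k‖ → ∞, c_k/‖c_k‖ → p, w_k → w̄ ∈ C, ‖c_k - x‖ ≤ r_k ≤ ‖c_k - w_k‖ for all x ∈ C and all k), if a sequence (y_k) satisfies y_k → y and ‖c_k - y_k‖ ≥ r_k for all k, then ⟨y - w̄, p⟩ ≤ 0. -/
/-!
Since `w̄ ∈ C`, we have `‖c_k - w̄‖ ≤ r_k ≤ ‖c_k - y_k‖`; expanding the squares gives
`‖w̄‖² - ‖y_k‖² ≤ 2⟪c_k, w̄ - y_k⟫`. Dividing by `‖c_k‖ → ∞` and letting `k → ∞`, the left side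
tends to `0` and the right side to `2⟪p, w̄ - ȳ⟫`.
-/

open Filter Topology

variable {E : Type*} [NormedAddCommGroup E] [InnerProductSpace ℝ E]

theorem norm_sq_sub_norm_sq_le_two_mul_inner_of_norm_sub_le {a b c : E}
    (h : ‖c - a‖ ≤ ‖c - b‖) : ‖a‖ ^ 2 - ‖b‖ ^ 2 ≤ 2 * inner ℝ c (a - b) := by
  have hsq : ‖c - a‖ ^ 2 ≤ ‖c - b‖ ^ 2 := pow_le_pow_left₀ (norm_nonneg _) h 2
  rw [norm_sub_sq_real, norm_sub_sq_real] at hsq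
  rw [inner_sub_right]
  linarith

theorem real_inner_sub_nonpos_of_norm_sub_le {c a b : ℕ → E} {p a₀ b₀ : E}
    (hc : Tendsto (fun k => ‖c k‖) atTop atTop)
    (hp : Tendsto (fun k => ‖c k‖⁻¹ • c k) atTop (𝓝 p))
    (ha : Tendsto a atTop (𝓝 a₀)) (hb : Tendsto b atTop (𝓝 b₀))
    (hab : ∀ k, ‖c k - a k‖ ≤ ‖c k - b k‖) :
    inner ℝ (b₀ - a₀) p ≤ 0 := by
  have hscaled : ∀ k, ‖c k‖⁻¹ * (‖a k‖ ^ 2 - ‖b k‖ ^ 2) ≤ 2 * inner ℝ (‖c k‖⁻¹ • c k) (a k - b k) := by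
    intro k
    rw [real_inner_smul_left, mul_left_comm]
    exact mul_le_mul_of_nonneg_left
      (norm_sq_sub_norm_sq_le_two_mul_inner_of_norm_sub_le (hab k)) (inv_nonneg.2 (norm_nonneg _))
  have hlhs : Tendsto (fun k => ‖c k‖⁻¹ * (‖a k‖ ^ 2 - ‖b k‖ ^ 2)) atTop (𝓝 0) := by
    simpa using hc.inv_tendsto_atTop.mul ((ha.norm.pow 2).sub (hb.norm.pow 2))
  have hrhs := (hp.inner (ha.sub hb)).const_mul (2 : ℝ)
  have h0 : 0 ≤ 2 * inner ℝ p (a₀ - b₀) := le_of_tendsto_of_tendsto' hlhs hrhs hscaled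
  rw [real_inner_comm, ← neg_sub, inner_neg_right]
  linarith

theorem stmt7_general (n : ℕ) (C : Set (EuclideanSpace ℝ (Fin n)))
    (c : ℕ → EuclideanSpace ℝ (Fin n)) (r : ℕ → ℝ)
    (p wbar : EuclideanSpace ℝ (Fin n))
    (hc : Filter.Tendsto (fun k => ‖c k‖) Filter.atTop Filter.atTop)
    (hp : Filter.Tendsto (fun k => ‖c k‖⁻¹ • c k) Filter.atTop (nhds p))
    (hwbar : wbar ∈ C)
    (h1 : ∀ k, ∀ x ∈ C, ‖c k - x‖ ≤ r k)
    (y : ℕ → EuclideanSpace ℝ (Fin n)) (ybar : EuclideanSpace ℝ (Fin n))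
    (hy : Filter.Tendsto y Filter.atTop (nhds ybar))
    (h3 : ∀ k, r k ≤ ‖c k - y k‖) :
    (inner ℝ (ybar - wbar) p : ℝ) ≤ 0 :=
  real_inner_sub_nonpos_of_norm_sub_le hc hp tendsto_const_nhds hy
    fun k => (h1 k wbar hwbar).trans (h3 k)

/-- Under the hypotheses of the previous statement, if moreover `y_k → y` and
`‖c_k - y_k‖ ≥ r_k` for all `k`, then `⟨y - w̄, p⟩ ≤ 0`. -/
theorem stmt7 (n : ℕ) (C : Set (EuclideanSpace ℝ (Fin n))) (hC : IsCompact C)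
    (hconv : Convex ℝ C)
    (c w : ℕ → EuclideanSpace ℝ (Fin n)) (r : ℕ → ℝ)
    (p wbar : EuclideanSpace ℝ (Fin n))
    (hc : Filter.Tendsto (fun k => ‖c k‖) Filter.atTop Filter.atTop)
    (hp : Filter.Tendsto (fun k => ‖c k‖⁻¹ • c k) Filter.atTop (nhds p))
    (hw : Filter.Tendsto w Filter.atTop (nhds wbar)) (hwbar : wbar ∈ C)
    (h1 : ∀ k, ∀ x ∈ C, ‖c k - x‖ ≤ r k)
    (h2 : ∀ k, r k ≤ ‖c k - w k‖)
    (y : ℕ → EuclideanSpace ℝ (Fin n)) (ybar : EuclideanSpace ℝ (Fin n))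
    (hy : Filter.Tendsto y Filter.atTop (nhds ybar))
    (h3 : ∀ k, r k ≤ ‖c k - y k‖) :
    (inner ℝ (ybar - wbar) p : ℝ) ≤ 0 :=
  stmt7_general n C c r p wbar hc hp hwbar h1 y ybar hy h3
end

section
/- Let C ⊂ ℝ^n be a compact convex set, F a proper exposed face of C, and D ⊆ C a compact convex subset with D ∩ ∂C = F. Then there exists a compact convex set G with D ⊆ G ⊊ C, relint G ⊆ relint C, G ∩ ∂C = F, and such that G and C have the same set of supporting hyperplanes at every point x ∈ F. -/
/-!
Let `l` expose `F`, with maximum `c` on `C`, and let `d` be the distance to the complement of `C`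
in its affine span: `d` is concave on `C`, positive on the relative interior and zero on the
relative boundary. The contact body `G₀ = {y ∈ C | (c - l y)² ≤ d y}` is compact and convex and
meets `∂C` only in `F`; it contains an initial piece of every segment from a point of `F` into
`relint C`, because along it `(c - l)²` vanishes to second order while `d` grows linearly.
Take `G = conv (D ∪ G₀)`. A point of `∂C` on a segment from `D` to `G₀` forces the endpoints
into `∂C`, hence into `F`; the segments from `F` into `relint C` force every hyperplane supporting
`G` at a point of `F` to support `C`; and a minimiser of `l` on `C` lies in `∂C \ F`, so `G ≠ C`.
-/

open Metric Set Filter Topology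

section ConvexGeometry

variable {E : Type*} [NormedAddCommGroup E] [NormedSpace ℝ E] {s C G : Set E} {x y q : E}

theorem AffineSubspace.smul_sub_add_mem (P : AffineSubspace ℝ E) (t : ℝ) {p₁ p₂ p₃ : E}
    (h₁ : p₁ ∈ P) (h₂ : p₂ ∈ P) (h₃ : p₃ ∈ P) : p₃ + t • (p₁ - p₂) ∈ P := by
  simpa [add_comm] using P.smul_vsub_vadd_mem t h₁ h₂ h₃

theorem mem_intrinsicInterior_iff_dist :
    x ∈ intrinsicInterior ℝ s ↔
      x ∈ affineSpan ℝ s ∧ ∃ ε > 0, ∀ w ∈ affineSpan ℝ s, dist w x < ε → w ∈ s := by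
  constructor
  · rintro ⟨x, hx, rfl⟩
    obtain ⟨ε, hε, hball⟩ := Metric.mem_nhds_iff.1 (mem_interior_iff_mem_nhds.1 hx)
    exact ⟨x.2, ε, hε, fun w hw hdist =>
      hball (show (⟨w, hw⟩ : affineSpan ℝ s) ∈ ball x ε from hdist)⟩
  · rintro ⟨hx, ε, hε, h⟩
    exact ⟨⟨x, hx⟩, mem_interior_iff_mem_nhds.2 (Metric.mem_nhds_iff.2
      ⟨ε, hε, fun w hw => h w w.2 hw⟩), rfl⟩

theorem exists_add_smul_sub_mem_of_mem_intrinsicInterior (hx : x ∈ intrinsicInterior ℝ s)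
    (hq : q ∈ affineSpan ℝ s) : ∃ δ : ℝ, 0 < δ ∧ x + δ • (x - q) ∈ s := by
  obtain ⟨hxs, ε, hε, h⟩ := mem_intrinsicInterior_iff_dist.1 hx
  set δ := ε / (2 * (‖x - q‖ + 1))
  have hδ : 0 < δ := by positivity
  refine ⟨δ, hδ, h _ ((affineSpan ℝ s).smul_sub_add_mem δ hxs hq hxs) ?_⟩
  rw [dist_eq_norm, add_sub_cancel_left, norm_smul, Real.norm_of_nonneg hδ.le]
  calc δ * ‖x - q‖ < δ * (2 * (‖x - q‖ + 1)) := by gcongr; linarith [norm_nonneg (x - q)]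
    _ = ε := div_mul_cancel₀ _ (by positivity)

theorem Convex.combo_intrinsicInterior_self_mem_intrinsicInterior (hs : Convex ℝ s)
    (hx : x ∈ intrinsicInterior ℝ s) (hy : y ∈ s) {a b : ℝ} (ha : 0 < a) (hb : 0 ≤ b)
    (hab : a + b = 1) : a • x + b • y ∈ intrinsicInterior ℝ s := by
  obtain ⟨hxA, ε, hε, h⟩ := mem_intrinsicInterior_iff_dist.1 hx
  have hyA := subset_affineSpan ℝ s hy
  have hmA : a • x + b • y ∈ affineSpan ℝ s := by
    convert (affineSpan ℝ s).smul_sub_add_mem a hxA hyA hyA using 1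
    rw [eq_sub_of_add_eq' hab]; module
  refine mem_intrinsicInterior_iff_dist.2 ⟨hmA, a * ε, by positivity, fun w hw hdist => ?_⟩
  -- `w` is the same combination with `x` moved to a point within `ε` of `x`
  set x' := x + a⁻¹ • (w - (a • x + b • y))
  have hx' : x' ∈ s := by
    refine h _ ((affineSpan ℝ s).smul_sub_add_mem _ hw hmA hxA) ?_
    rw [dist_eq_norm, add_sub_cancel_left, norm_smul, Real.norm_of_nonneg (by positivity),
      ← dist_eq_norm, inv_mul_lt_iff₀ ha]
    exact hdist
  convert hs hx' hy ha.le hb hab using 1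
  simp only [x', smul_add, smul_smul, mul_inv_cancel₀ ha.ne', one_smul]
  abel

theorem IsClosed.intrinsicFrontier_eq (hs : IsClosed s) :
    intrinsicFrontier ℝ s = s \ intrinsicInterior ℝ s := by
  rw [← intrinsicClosure_sdiff_intrinsicInterior,
    (hs.preimage continuous_subtype_val).intrinsicClosure]

theorem Convex.subset_closure_intrinsicInterior (hC : Convex ℝ C)
    (hne : (intrinsicInterior ℝ C).Nonempty) : C ⊆ closure (intrinsicInterior ℝ C) := by
  obtain ⟨z, hz⟩ := hne
  intro y hy
  have hlim : Tendsto (fun t : ℝ => t • z + (1 - t) • y) (𝓝[>] 0) (𝓝 y) := by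
    have hcont : Continuous (fun t : ℝ => t • z + (1 - t) • y) := by fun_prop
    simpa using (hcont.tendsto 0).mono_left nhdsWithin_le_nhds
  refine mem_closure_of_tendsto hlim ?_
  filter_upwards [Ioo_mem_nhdsGT one_pos] with t ht
  exact hC.combo_intrinsicInterior_self_mem_intrinsicInterior hz hy ht.1 (by linarith [ht.2])
    (by ring)

theorem Convex.intrinsicInterior_subset_of_subset (hC : Convex ℝ C) (hGC : G ⊆ C) (hqG : q ∈ G)
    (hqC : q ∈ intrinsicInterior ℝ C) : intrinsicInterior ℝ G ⊆ intrinsicInterior ℝ C := by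
  intro g hg
  obtain ⟨δ, hδ, hmem⟩ :=
    exists_add_smul_sub_mem_of_mem_intrinsicInterior hg (subset_affineSpan ℝ G hqG)
  convert hC.combo_intrinsicInterior_self_mem_intrinsicInterior hqC (hGC hmem)
    (a := δ / (1 + δ)) (b := 1 / (1 + δ)) (by positivity) (by positivity)
    (by field_simp; ring) using 1
  match_scalars <;> field_simp
  ring

theorem convexJoin_inter_intrinsicFrontier_subset {A B K : Set E} (hC : Convex ℝ C)
    (hCcl : IsClosed C) (hA : A ⊆ C) (hB : B ⊆ C) (hK : Convex ℝ K)
    (hAK : A ∩ intrinsicFrontier ℝ C ⊆ K) (hBK : B ∩ intrinsicFrontier ℝ C ⊆ K) :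
    convexJoin ℝ A B ∩ intrinsicFrontier ℝ C ⊆ K := by
  rw [hCcl.intrinsicFrontier_eq] at hAK hBK ⊢
  rintro m ⟨hm, -, hmi⟩
  obtain ⟨a, ha, b, hb, hmab⟩ := mem_convexJoin.1 hm
  by_cases hma : a = m
  · exact hAK ⟨hma ▸ ha, hA (hma ▸ ha), hmi⟩
  by_cases hmb : b = m
  · exact hBK ⟨hmb ▸ hb, hB (hmb ▸ hb), hmi⟩
  obtain ⟨u, v, hu, hv, huv, rfl⟩ := mem_openSegment_of_ne_left_right hma hmb hmab
  have ha' : a ∉ intrinsicInterior ℝ C := fun h =>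
    hmi (hC.combo_intrinsicInterior_self_mem_intrinsicInterior h (hB hb) hu hv.le huv)
  have hb' : b ∉ intrinsicInterior ℝ C := fun h => hmi <| by
    rw [add_comm]
    exact hC.combo_intrinsicInterior_self_mem_intrinsicInterior h (hA ha) hv hu.le
      (by rw [add_comm, huv])
  exact hK (hAK ⟨ha, hA ha, ha'⟩) (hBK ⟨hb, hB hb, hb'⟩) hu.le hv.le huv

theorem IsMinOn.apply_eq_of_mem_intrinsicInterior {l : StrongDual ℝ E} {w : E}
    (hw : IsMinOn l C w) (hwi : w ∈ intrinsicInterior ℝ C) (hy : y ∈ C) : l y = l w := by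
  obtain ⟨δ, hδ, hmem⟩ :=
    exists_add_smul_sub_mem_of_mem_intrinsicInterior hwi (subset_affineSpan ℝ C hy)
  have hext : l w ≤ l (w + δ • (w - y)) := hw hmem
  simp only [map_add, map_smul, map_sub, smul_eq_mul] at hext
  nlinarith [show l w ≤ l y from hw hy]

theorem IsCompact.exists_mem_intrinsicFrontier_apply_lt (hC : IsCompact C) (l : StrongDual ℝ E)
    (hx : x ∈ C) (hy : y ∈ C) (hlt : l x < l y) : ∃ w ∈ intrinsicFrontier ℝ C, l w < l y := by
  obtain ⟨w, hwC, hw⟩ := hC.exists_isMinOn ⟨x, hx⟩ l.continuous.continuousOn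
  refine ⟨w, ?_, (hw hx).trans_lt hlt⟩
  rw [hC.isClosed.intrinsicFrontier_eq]
  refine ⟨hwC, fun hwi => ?_⟩
  have := hw.apply_eq_of_mem_intrinsicInterior hwi hx
  have := hw.apply_eq_of_mem_intrinsicInterior hwi hy
  linarith

theorem IsCompact.convexJoin {t : Set E} (hs : IsCompact s) (ht : IsCompact t) :
    IsCompact (_root_.convexJoin ℝ s t) := by
  have himage : _root_.convexJoin ℝ s t =
      (fun p : ℝ × E × E => (1 - p.1) • p.2.1 + p.1 • p.2.2) '' (Icc 0 1 ×ˢ s ×ˢ t) := by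
    ext z
    simp only [mem_convexJoin, segment_eq_image, mem_image, mem_prod, Prod.exists]
    aesop
  rw [himage]
  exact (isCompact_Icc.prod (hs.prod ht)).image (by fun_prop)

theorem IsExposed.exists_eq_setOf_apply_eq {F : Set E} (hF : IsExposed ℝ C F) (hne : F.Nonempty) :
    ∃ l : StrongDual ℝ E, ∃ c, (∀ y ∈ C, l y ≤ c) ∧ F = {y ∈ C | l y = c} := by
  obtain ⟨l, rfl⟩ := hF hne
  obtain ⟨x, hxC, hx⟩ := hne
  exact ⟨l, l x, hx, Subset.antisymm (fun y hy => ⟨hy.1, le_antisymm (hx y hy.1) (hy.2 x hxC)⟩)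
    fun y hy => ⟨hy.1, fun z hz => hy.2 ▸ hx z hz⟩⟩

end ConvexGeometry

section RelComplDist

variable {E : Type*} [NormedAddCommGroup E] [NormedSpace ℝ E] {C : Set E} {x y w : E}

/-- For convex `C` and `y ∈ C`, this is the distance from `y` to the relative boundary of `C`. -/
noncomputable def relComplDist (C : Set E) (y : E) : ℝ :=
  infDist y ((affineSpan ℝ C : Set E) \ C)

theorem relComplDist_nonneg : 0 ≤ relComplDist C y := infDist_nonneg

theorem mem_of_dist_lt_relComplDist (hw : w ∈ affineSpan ℝ C) (h : dist w y < relComplDist C y) :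
    w ∈ C := by
  by_contra hwC
  have hwS : w ∈ (affineSpan ℝ C : Set E) \ C := ⟨hw, hwC⟩
  exact (infDist_le_dist_of_mem hwS).not_gt (dist_comm w y ▸ h)

theorem mem_intrinsicInterior_of_relComplDist_pos (hy : y ∈ C) (h : 0 < relComplDist C y) :
    y ∈ intrinsicInterior ℝ C :=
  mem_intrinsicInterior_iff_dist.2
    ⟨subset_affineSpan ℝ C hy, _, h, fun _ hw hdist => mem_of_dist_lt_relComplDist hw hdist⟩

theorem relComplDist_pos (hS : ((affineSpan ℝ C : Set E) \ C).Nonempty)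
    (hy : y ∈ intrinsicInterior ℝ C) : 0 < relComplDist C y := by
  obtain ⟨-, ε, hε, h⟩ := mem_intrinsicInterior_iff_dist.1 hy
  refine hε.trans_le ((le_infDist hS).2 fun w hw => ?_)
  by_contra! hlt
  exact hw.2 (h w hw.1 (by rwa [dist_comm]))

theorem concaveOn_relComplDist (hC : Convex ℝ C) : ConcaveOn ℝ C (relComplDist C) := by
  refine ⟨hC, fun x hx y hy a b ha hb hab => ?_⟩
  simp only [smul_eq_mul]
  set m := a • x + b • y
  set r := a * relComplDist C x + b * relComplDist C y
  obtain hS | hS := ((affineSpan ℝ C : Set E) \ C).eq_empty_or_nonempty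
  · simp [r, relComplDist, hS]
  rcases le_or_gt r 0 with hr | hr
  · exact hr.trans relComplDist_nonneg
  have hmA : m ∈ affineSpan ℝ C := subset_affineSpan ℝ C (hC hx hy ha hb hab)
  rw [relComplDist, le_infDist hS]
  intro w hw
  by_contra! hwm
  apply hw.2
  -- each `z ∈ C` moves by `(relComplDist C z / r) • (w - m)` within `C`; the moves average to `w`
  have hshift : ∀ z ∈ C, z + (relComplDist C z / r) • (w - m) ∈ C := by
    intro z hz
    rcases (relComplDist_nonneg (C := C) (y := z)).eq_or_lt with h0 | h0
    · simpa [← h0] using hz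
    refine mem_of_dist_lt_relComplDist (y := z)
      ((affineSpan ℝ C).smul_sub_add_mem _ hw.1 hmA (subset_affineSpan ℝ C hz)) ?_
    rw [dist_eq_norm, add_sub_cancel_left, norm_smul, Real.norm_of_nonneg (by positivity),
      ← dist_eq_norm, dist_comm]
    calc relComplDist C z / r * dist m w < relComplDist C z / r * r := by gcongr
      _ = relComplDist C z := div_mul_cancel₀ _ hr.ne'
  have hsum : a * (relComplDist C x / r) + b * (relComplDist C y / r) = 1 := by
    field_simp
    rfl
  convert hC (hshift x hx) (hshift y hy) ha hb hab using 1
  calc w = m + (a * (relComplDist C x / r) + b * (relComplDist C y / r)) • (w - m) := by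
        rw [hsum, one_smul, add_sub_cancel]
    _ = _ := by simp only [m]; module

theorem Bornology.IsBounded.affineSpan_sdiff_nonempty (hC : Bornology.IsBounded C) (hx : x ∈ C)
    (hy : y ∈ C) (hxy : x ≠ y) : ((affineSpan ℝ C : Set E) \ C).Nonempty := by
  by_contra! hS
  obtain ⟨R, hR⟩ := hC.exists_norm_le
  have hyx : 0 < ‖y - x‖ := norm_pos_iff.2 (sub_ne_zero.2 hxy.symm)
  set k := (R + ‖x‖ + 1) / ‖y - x‖
  have hk : x + k • (y - x) ∈ C := sdiff_eq_empty.1 hS <|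
    (affineSpan ℝ C).smul_sub_add_mem k (subset_affineSpan ℝ C hy) (subset_affineSpan ℝ C hx)
      (subset_affineSpan ℝ C hx)
  have hnorm : ‖k • (y - x)‖ = R + ‖x‖ + 1 := by
    rw [norm_smul, Real.norm_of_nonneg (div_nonneg (by linarith [hR x hx, norm_nonneg x]) hyx.le),
      div_mul_cancel₀ _ hyx.ne']
  have := norm_sub_le (x + k • (y - x)) x
  rw [add_sub_cancel_left, hnorm] at this
  linarith [hR _ hk]

end RelComplDist

section ContactBody

variable {E : Type*} [NormedAddCommGroup E] [NormedSpace ℝ E] {C : Set E} {l : StrongDual ℝ E}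
  {c : ℝ} {x y : E}

def contactBody (C : Set E) (l : StrongDual ℝ E) (c : ℝ) : Set E :=
  {y ∈ C | (c - l y) ^ 2 ≤ relComplDist C y}

theorem contactBody_subset : contactBody C l c ⊆ C := sep_subset _ _

theorem convex_contactBody (hC : Convex ℝ C) (hlc : ∀ y ∈ C, l y ≤ c) :
    Convex ℝ (contactBody C l c) := by
  have hf : ConvexOn ℝ C ((fun y => c - l y) ^ 2 - relComplDist C) :=
    (((convexOn_const c hC).sub (l.toLinearMap.concaveOn hC)).pow
      (fun y hy => sub_nonneg.2 (hlc y hy)) 2).sub (concaveOn_relComplDist hC)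
  convert hf.convex_le 0 using 1
  ext y
  simp [contactBody]

theorem IsClosed.contactBody (hC : IsClosed C) : IsClosed (contactBody C l c) :=
  hC.inter (_root_.isClosed_le (by fun_prop) (continuous_infDist_pt _))

theorem mem_contactBody_of_apply_eq (hy : y ∈ C) (hly : l y = c) : y ∈ contactBody C l c :=
  ⟨hy, by simpa [hly] using relComplDist_nonneg⟩

theorem apply_eq_of_mem_contactBody (hy : y ∈ contactBody C l c)
    (hyi : y ∉ intrinsicInterior ℝ C) : l y = c := by
  have hd : relComplDist C y ≤ 0 :=
    not_lt.1 fun h => hyi (mem_intrinsicInterior_of_relComplDist_pos hy.1 h)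
  have hsq : (c - l y) ^ 2 = 0 := le_antisymm (hy.2.trans hd) (sq_nonneg _)
  linarith [pow_eq_zero_iff two_ne_zero |>.1 hsq]

theorem exists_smul_add_smul_mem_contactBody (hC : Convex ℝ C)
    (hS : ((affineSpan ℝ C : Set E) \ C).Nonempty) (hx : x ∈ C) (hlx : l x = c)
    (hy : y ∈ intrinsicInterior ℝ C) :
    ∃ t : ℝ, 0 < t ∧ t ≤ 1 ∧ (1 - t) • x + t • y ∈ contactBody C l c := by
  have hyC : y ∈ C := intrinsicInterior_subset hy
  have hdy := relComplDist_pos hS hy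
  set t := min 1 (relComplDist C y / ((c - l y) ^ 2 + 1))
  have ht : 0 < t := lt_min one_pos (by positivity)
  have ht1 : t ≤ 1 := min_le_left _ _
  have htq : t * (c - l y) ^ 2 ≤ relComplDist C y := by
    calc t * (c - l y) ^ 2 ≤ relComplDist C y / ((c - l y) ^ 2 + 1) * ((c - l y) ^ 2 + 1) := by
          gcongr
          · exact min_le_right _ _
          · linarith
      _ = relComplDist C y := div_mul_cancel₀ _ (by positivity)
  have hconc : (1 - t) • relComplDist C x + t • relComplDist C y ≤
      relComplDist C ((1 - t) • x + t • y) :=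
    (concaveOn_relComplDist hC).2 hx hyC (by linarith) ht.le (by ring)
  simp only [smul_eq_mul] at hconc
  refine ⟨t, ht, ht1, hC hx hyC (by linarith) ht.le (by ring), ?_⟩
  calc (c - l ((1 - t) • x + t • y)) ^ 2 = t * (t * (c - l y) ^ 2) := by
        simp only [map_add, map_smul, smul_eq_mul, hlx]; ring
    _ ≤ t * relComplDist C y := by gcongr
    _ ≤ (1 - t) * relComplDist C x + t * relComplDist C y := by
        nlinarith [relComplDist_nonneg (C := C) (y := x)]
    _ ≤ _ := hconc

theorem convexJoin_contactBody_inter_intrinsicFrontier {D : Set E} (hC : Convex ℝ C)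
    (hCcl : IsClosed C) (hDC : D ⊆ C)
    (hDbd : D ∩ intrinsicFrontier ℝ C = {y ∈ C | l y = c}) :
    convexJoin ℝ D (contactBody C l c) ∩ intrinsicFrontier ℝ C = {y ∈ C | l y = c} := by
  refine Subset.antisymm (convexJoin_inter_intrinsicFrontier_subset hC hCcl hDC contactBody_subset
    (hC.inter (convex_hyperplane l.isLinear c)) hDbd.le ?_) fun y hy => ⟨?_, (hDbd.ge hy).2⟩
  · rintro y ⟨hy, hyfr⟩
    rw [hCcl.intrinsicFrontier_eq] at hyfr
    exact ⟨hy.1, apply_eq_of_mem_contactBody hy hyfr.2⟩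
  · exact segment_subset_convexJoin (hDbd.ge hy).1 (mem_contactBody_of_apply_eq hy.1 hy.2)
      (left_mem_segment ℝ y y)

end ContactBody

theorem Convex.inner_sub_nonpos_of_exists_smul_add_smul_mem {E : Type*} [NormedAddCommGroup E]
    [InnerProductSpace ℝ E] {C G : Set E} {x p : E} (hC : Convex ℝ C)
    (hne : (intrinsicInterior ℝ C).Nonempty)
    (hG : ∀ y ∈ intrinsicInterior ℝ C, ∃ t : ℝ, 0 < t ∧ (1 - t) • x + t • y ∈ G)
    (hp : ∀ y ∈ G, inner ℝ (y - x) p ≤ 0) : ∀ y ∈ C, inner ℝ (y - x) p ≤ 0 := by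
  have hclosed : IsClosed {y : E | inner ℝ (y - x) p ≤ 0} :=
    isClosed_le (by fun_prop) continuous_const
  have hrel : intrinsicInterior ℝ C ⊆ {y : E | inner ℝ (y - x) p ≤ 0} := by
    intro y hy
    obtain ⟨t, ht, hmem⟩ := hG y hy
    have hpt := hp _ hmem
    rw [show (1 - t) • x + t • y - x = t • (y - x) by module, real_inner_smul_left] at hpt
    exact nonpos_of_mul_nonpos_right hpt ht
  exact fun y hy => hclosed.closure_subset_iff.2 hrel (hC.subset_closure_intrinsicInterior hne hy)

/-- Proposition 3.3: if `C ⊂ ℝⁿ` is compact convex, `F` a proper (nonempty) exposed face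
of `C`, and `D ⊆ C` compact convex with `D ∩ ∂C = F`, then there is a compact convex `G`
with `D ⊆ G ⊊ C`, `relint G ⊆ relint C`, `G ∩ ∂C = F`, and `G` and `C` have the same
supporting hyperplanes at every point of `F`. -/
theorem stmt9 (n : ℕ) (C F D : Set (EuclideanSpace ℝ (Fin n)))
    (hC : IsCompact C) (hCconv : Convex ℝ C)
    (hF : IsExposed ℝ C F) (hFne : F.Nonempty) (hFproper : F ≠ C)
    (hD : IsCompact D) (hDconv : Convex ℝ D) (hDC : D ⊆ C)
    (hDbd : D ∩ intrinsicFrontier ℝ C = F) :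
    ∃ G : Set (EuclideanSpace ℝ (Fin n)), IsCompact G ∧ Convex ℝ G ∧
      D ⊆ G ∧ G ⊆ C ∧ G ≠ C ∧
      intrinsicInterior ℝ G ⊆ intrinsicInterior ℝ C ∧
      G ∩ intrinsicFrontier ℝ C = F ∧
      (∀ x ∈ F, ∀ p : EuclideanSpace ℝ (Fin n), p ≠ 0 →
        ((∀ y ∈ G, (inner ℝ (y - x) p : ℝ) ≤ 0) ↔
          (∀ y ∈ C, (inner ℝ (y - x) p : ℝ) ≤ 0))) := by
  obtain ⟨l, c, hlc, rfl⟩ := hF.exists_eq_setOf_apply_eq hFne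
  obtain ⟨x₀, hx₀C, hlx₀⟩ := hFne
  obtain ⟨y₀, hy₀C, hly₀⟩ : ∃ y ∈ C, l y < c := by
    by_contra! h
    exact hFproper (hF.subset.antisymm fun y hy => ⟨hy, (hlc y hy).antisymm (h y hy)⟩)
  have hS := hC.isBounded.affineSpan_sdiff_nonempty hx₀C hy₀C (by rintro rfl; linarith)
  have hseg : ∀ x ∈ {y ∈ C | l y = c}, ∀ y ∈ intrinsicInterior ℝ C,
      ∃ t : ℝ, 0 < t ∧ t ≤ 1 ∧ (1 - t) • x + t • y ∈ contactBody C l c := fun x hx y hy =>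
    exists_smul_add_smul_mem_contactBody hCconv hS hx.1 hx.2 hy
  obtain ⟨z₀, hz₀⟩ := Set.Nonempty.intrinsicInterior hCconv ⟨x₀, hx₀C⟩
  obtain ⟨t₀, ht₀, ht₀1, hq⟩ := hseg x₀ ⟨hx₀C, hlx₀⟩ z₀ hz₀
  have hqC : (1 - t₀) • x₀ + t₀ • z₀ ∈ intrinsicInterior ℝ C := by
    rw [add_comm]
    exact hCconv.combo_intrinsicInterior_self_mem_intrinsicInterior hz₀ hx₀C ht₀ (by linarith)
      (by ring)
  set G₀ := contactBody C l c
  have hDG : D ⊆ convexJoin ℝ D G₀ := subset_convexJoin_left ⟨_, hq⟩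
  have hG₀G : G₀ ⊆ convexJoin ℝ D G₀ := subset_convexJoin_right ⟨x₀, (hDbd.ge ⟨hx₀C, hlx₀⟩).1⟩
  have hGC : convexJoin ℝ D G₀ ⊆ C := convexJoin_subset hDC contactBody_subset hCconv
  have hGF := convexJoin_contactBody_inter_intrinsicFrontier hCconv hC.isClosed hDC hDbd
  refine ⟨convexJoin ℝ D G₀,
    hD.convexJoin (hC.of_isClosed_subset hC.isClosed.contactBody contactBody_subset),
    hDconv.convexJoin (convex_contactBody hCconv hlc), hDG, hGC, fun hGeq => ?_,
    hCconv.intrinsicInterior_subset_of_subset hGC (hG₀G hq) hqC, hGF,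
    fun x hx p _ => ⟨fun h => ?_, fun h y hy => h y (hGC hy)⟩⟩
  · obtain ⟨w, hw, hlw⟩ := hC.exists_mem_intrinsicFrontier_apply_lt l hy₀C hx₀C (hlx₀ ▸ hly₀)
    have hwG : w ∈ convexJoin ℝ D G₀ := hGeq.symm ▸ intrinsicFrontier_subset hC.isClosed hw
    linarith [(hGF.subset ⟨hwG, hw⟩).2]
  · refine hCconv.inner_sub_nonpos_of_exists_smul_add_smul_mem ⟨z₀, hz₀⟩ (fun y hy => ?_) h
    obtain ⟨t, ht, -, hmem⟩ := hseg x hx y hy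
    exact ⟨t, ht, hG₀G hmem⟩
end

section
/- Let F = {(l,x,y,0,0) ∈ ℝ⁵ : 2yl - x² - y² ≥ 0, l ≥ 0}, and for t ∈ [0,1] define α(t) = (1,0,t²,t,t³), β(t) = (1,t/2,t³,-t/2,t³), γ(t) = (1,-t/2,t³,-t/2,t³). Suppose δ₁, δ₂, δ₃ : [0,1] → {0}×ℝ⁴ satisfy ‖δᵢ(t)‖ ≤ t³ for all t. Then there is no idempotent linear map P : ℝ⁵ → ℝ⁵ with P(F) = F, P(ℝ⁵) ⊆ span F, and P(α(t)+δ₁(t)) ∈ F, P(β(t)+δ₂(t)) ∈ F, P(γ(t)+δ₃(t)) ∈ F for all t ∈ [0,1]. -/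
/-!
Idempotence and `P F = F` make `P` fix `F` pointwise, hence `P` is the identity on
`span F = ℝ³ × 0` and is determined by `a = P e₃` and `b = P e₄`. The point `e₀` lies on the
boundary of `F`, and since `y ≥ 0` and `x² ≤ 2yl` on `F`, a curve `e₀ + t u + t² v + O(t³)`
can stay in `F` for small `t > 0` only if `u₂ ≥ 0` and, when `u₂ = 0`, `u₁² ≤ 2 v₂`.
The images of `α, β, γ` have first-order terms `a`, `(e₁ - a)/2`, `-(e₁ + a)/2` and vanishing
second-order terms for `β, γ`: the first condition forces `a₂ = 0`, then the second forces
both `a₁ = 1` and `a₁ = -1`.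
-/

/-- The cone `F = {(l,x,y,0,0) : 2yl - x² - y² ≥ 0, l ≥ 0}` in coordinates
`(l,x,y,z,s) = (v 0, v 1, v 2, v 3, v 4)`. -/
def Fcone : Set (EuclideanSpace ℝ (Fin 5)) :=
  {v | 0 ≤ 2 * v 2 * v 0 - (v 1) ^ 2 - (v 2) ^ 2 ∧ 0 ≤ v 0 ∧ v 3 = 0 ∧ v 4 = 0}

/-- The curve `α(t) = (1, 0, t², t, t³)`. -/
noncomputable def curveA (t : ℝ) : EuclideanSpace ℝ (Fin 5) := WithLp.toLp 2 ![1, 0, t ^ 2, t, t ^ 3]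

/-- The curve `β(t) = (1, t/2, t³, -t/2, t³)`. -/
noncomputable def curveB (t : ℝ) : EuclideanSpace ℝ (Fin 5) := WithLp.toLp 2 ![1, t / 2, t ^ 3, -(t / 2), t ^ 3]

/-- The curve `γ(t) = (1, -t/2, t³, -t/2, t³)`. -/
noncomputable def curveC (t : ℝ) : EuclideanSpace ℝ (Fin 5) := WithLp.toLp 2 ![1, -(t / 2), t ^ 3, -(t / 2), t ^ 3]

open Filter Topology Asymptotics

local notation "ℝ⁵" => EuclideanSpace ℝ (Fin 5)
local notation "𝐞" i:max => EuclideanSpace.single (i : Fin 5) (1 : ℝ)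

lemma eqOn_of_idempotent_of_image_eq {α : Type*} {f : α → α} {s : Set α}
    (hf : ∀ x, f (f x) = f x) (hs : f '' s = s) : Set.EqOn f id s := by
  rintro _ hx
  obtain ⟨y, -, rfl⟩ := hs.symm ▸ hx
  exact hf y

lemma tendsto_div_pow_of_isBigO {f : ℝ → ℝ} {n k : ℕ} (hf : f =O[𝓝[>] 0] (· ^ n)) (hk : k < n) :
    Tendsto (fun t => f t / t ^ k) (𝓝[>] 0) (𝓝 0) :=
  (hf.trans_isLittleO ((isLittleO_pow_pow hk).mono nhdsWithin_le_nhds)).tendsto_div_nhds_zero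

lemma EuclideanSpace.isBigO_apply {α ι : Type*} [Fintype ι] {l : Filter α} {g : α → ℝ}
    {r : α → EuclideanSpace ℝ ι} (hr : r =O[l] g) (i : ι) : (fun t => r t i) =O[l] g :=
  (isBigO_of_le _ fun t => PiLp.norm_apply_le (r t) i).trans hr

lemma isBigO_pow_of_norm_le {E : Type*} [SeminormedAddCommGroup E] {δ : ℝ → E} {n : ℕ}
    (hδ : ∀ t ∈ Set.Icc (0 : ℝ) 1, ‖δ t‖ ≤ t ^ n) : δ =O[𝓝[>] 0] (· ^ n) := by
  refine IsBigO.of_bound 1 ?_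
  filter_upwards [Ioo_mem_nhdsGT one_pos] with t ht
  rw [one_mul, Real.norm_of_nonneg (by positivity [ht.1.le])]
  exact hδ t (Set.Ioo_subset_Icc_self ht)

namespace Fcone

lemma coord_two_nonneg {v : ℝ⁵} (hv : v ∈ Fcone) : 0 ≤ v 2 := by
  obtain ⟨h, h0, -, -⟩ := hv
  nlinarith [sq_nonneg (v 1)]

lemma sq_coord_one_le {v : ℝ⁵} (hv : v ∈ Fcone) : v 1 ^ 2 ≤ 2 * v 2 * v 0 := by
  obtain ⟨h, -, -, -⟩ := hv
  nlinarith [sq_nonneg (v 2)]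

lemma single_zero_mem : 𝐞 0 ∈ Fcone := by
  simp [Fcone]

variable {u v : ℝ⁵} {r : ℝ → ℝ⁵}

lemma coord_two_nonneg_of_expansion (hr : r =O[𝓝[>] 0] (· ^ 3))
    (hF : ∀ᶠ t in 𝓝[>] 0, 𝐞 0 + t • u + t ^ 2 • v + r t ∈ Fcone) : 0 ≤ u 2 := by
  have ht : Tendsto (fun t : ℝ => t) (𝓝[>] 0) (𝓝 0) := tendsto_id.mono_left nhdsWithin_le_nhds
  have hlim : Tendsto (fun t => (𝐞 0 + t • u + t ^ 2 • v + r t) 2 / t) (𝓝[>] 0) (𝓝 (u 2)) := by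
    have := tendsto_const_nhds (x := u 2) |>.add <|
      (ht.mul_const (v 2)).add (tendsto_div_pow_of_isBigO (EuclideanSpace.isBigO_apply hr 2)
        (k := 1) (by norm_num))
    rw [zero_mul, zero_add, add_zero] at this
    refine this.congr' ?_
    filter_upwards [self_mem_nhdsWithin] with t (htpos : 0 < t)
    simp only [PiLp.add_apply, PiLp.smul_apply, smul_eq_mul, PiLp.single_apply, Fin.reduceEq,
      if_false, zero_add]
    field_simp
    ring
  refine ge_of_tendsto hlim ?_
  filter_upwards [hF, self_mem_nhdsWithin] with t hFt (htpos : 0 < t)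
  exact div_nonneg (coord_two_nonneg hFt) htpos.le

lemma sq_coord_one_le_of_expansion (hr : r =O[𝓝[>] 0] (· ^ 3))
    (hF : ∀ᶠ t in 𝓝[>] 0, 𝐞 0 + t • u + t ^ 2 • v + r t ∈ Fcone) (hu : u 2 = 0) :
    u 1 ^ 2 ≤ 2 * v 2 := by
  set p := fun t : ℝ => 𝐞 0 + t • u + t ^ 2 • v + r t
  have ht : Tendsto (fun t : ℝ => t) (𝓝[>] 0) (𝓝 0) := tendsto_id.mono_left nhdsWithin_le_nhds
  have hl : Tendsto (fun t => p t 0) (𝓝[>] 0) (𝓝 1) := by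
    have hr0 := (EuclideanSpace.isBigO_apply hr 0).trans_tendsto (by simpa using ht.pow 3)
    have := ((tendsto_const_nhds (x := (1 : ℝ))).add (ht.mul_const (u 0))).add
      ((ht.pow 2).mul_const (v 0)) |>.add hr0
    rw [zero_mul, zero_pow two_ne_zero, zero_mul, add_zero, add_zero, add_zero] at this
    exact this.congr fun t => by simp [p]
  have hx : Tendsto (fun t => p t 1 / t) (𝓝[>] 0) (𝓝 (u 1)) := by
    have := ((tendsto_const_nhds (x := u 1)).add (ht.mul_const (v 1))).add
      (tendsto_div_pow_of_isBigO (EuclideanSpace.isBigO_apply hr 1) (k := 1) (by norm_num))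
    rw [zero_mul, add_zero, add_zero] at this
    refine this.congr' ?_
    filter_upwards [self_mem_nhdsWithin] with t (htpos : 0 < t)
    simp only [PiLp.add_apply, PiLp.smul_apply, smul_eq_mul, PiLp.single_apply, Fin.reduceEq,
      if_false, zero_add, p]
    field_simp
  have hy : Tendsto (fun t => p t 2 / t ^ 2) (𝓝[>] 0) (𝓝 (v 2)) := by
    have := (tendsto_const_nhds (x := v 2)).add
      (tendsto_div_pow_of_isBigO (EuclideanSpace.isBigO_apply hr 2) (k := 2) (by norm_num))
    rw [add_zero] at this
    refine this.congr' ?_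
    filter_upwards [self_mem_nhdsWithin] with t (htpos : 0 < t)
    simp only [PiLp.add_apply, PiLp.smul_apply, smul_eq_mul, PiLp.single_apply, Fin.reduceEq,
      if_false, zero_add, p, hu]
    field_simp
    ring
  have key := le_of_tendsto_of_tendsto (hx.pow 2) ((hy.const_mul 2).mul hl) ?_
  · rwa [mul_one] at key
  filter_upwards [hF, self_mem_nhdsWithin] with t hFt (htpos : 0 < t)
  calc (p t 1 / t) ^ 2 = p t 1 ^ 2 / t ^ 2 := div_pow ..
    _ ≤ 2 * p t 2 * p t 0 / t ^ 2 := by gcongr; exact sq_coord_one_le hFt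
    _ = 2 * (p t 2 / t ^ 2) * p t 0 := by ring

end Fcone

lemma apply_single_eq_of_eqOn_Fcone {P : ℝ⁵ →ₗ[ℝ] ℝ⁵} (hP : Set.EqOn P id Fcone) :
    P (𝐞 0) = 𝐞 0 ∧ P (𝐞 1) = 𝐞 1 ∧ P (𝐞 2) = 𝐞 2 := by
  have mem : ∀ s : ℝ, s ^ 2 ≤ 1 → 𝐞 0 + s • 𝐞 1 + 𝐞 2 ∈ Fcone := fun s hs => by
    simp only [Fcone, Set.mem_ofPred_eq, PiLp.add_apply, PiLp.smul_apply, smul_eq_mul,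
      PiLp.single_apply, Fin.reduceEq, if_true, if_false]
    refine ⟨by nlinarith, by norm_num, by norm_num, by norm_num⟩
  have h0 : P (𝐞 0) = 𝐞 0 := hP Fcone.single_zero_mem
  have h02 := hP (mem 0 (by norm_num))
  have h012 := hP (mem 1 (by norm_num))
  simp only [map_add, zero_smul, add_zero, one_smul, id, h0] at h02 h012
  have h2 : P (𝐞 2) = 𝐞 2 := add_left_cancel h02
  rw [h2, add_assoc, add_assoc] at h012
  exact ⟨h0, add_right_cancel (add_left_cancel h012), h2⟩

lemma expansion_conditions_of_map_mem_Fcone {P : ℝ⁵ →ₗ[ℝ] ℝ⁵} (hP : P (𝐞 0) = 𝐞 0) {c δ : ℝ → ℝ⁵}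
    {u v w : ℝ⁵} (hc : ∀ t, c t = 𝐞 0 + t • u + t ^ 2 • v + t ^ 3 • w)
    (hδ : δ =O[𝓝[>] 0] (· ^ 3)) (hF : ∀ t ∈ Set.Icc (0 : ℝ) 1, P (c t + δ t) ∈ Fcone) :
    0 ≤ P u 2 ∧ (P u 2 = 0 → P u 1 ^ 2 ≤ 2 * P v 2) := by
  set r := fun t : ℝ => t ^ 3 • P w + P (δ t)
  have hr : r =O[𝓝[>] 0] (· ^ 3) :=
    (isBigO_of_le' (c := ‖P w‖) _ fun t => by rw [norm_smul, mul_comm]).add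
      ((LinearMap.toContinuousLinearMap P).isBigO_comp δ _ |>.trans hδ)
  have hF' : ∀ᶠ t in 𝓝[>] 0, 𝐞 0 + t • P u + t ^ 2 • P v + r t ∈ Fcone := by
    filter_upwards [Ioo_mem_nhdsGT one_pos] with t ht
    convert hF t (Set.Ioo_subset_Icc_self ht) using 1
    simp only [r, hc, map_add, map_smul, hP, add_assoc]
  exact ⟨Fcone.coord_two_nonneg_of_expansion hr hF',
    Fcone.sq_coord_one_le_of_expansion hr hF'⟩

lemma curveA_eq (t : ℝ) : curveA t = 𝐞 0 + t • 𝐞 3 + t ^ 2 • 𝐞 2 + t ^ 3 • 𝐞 4 := by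
  ext i; fin_cases i <;> simp [curveA]

lemma curveB_eq (t : ℝ) :
    curveB t = 𝐞 0 + t • ((1 / 2 : ℝ) • (𝐞 1 - 𝐞 3)) + t ^ 2 • (0 : ℝ⁵) + t ^ 3 • (𝐞 2 + 𝐞 4) := by
  ext i; fin_cases i <;> simp [curveB] <;> ring

lemma curveC_eq (t : ℝ) :
    curveC t = 𝐞 0 + t • (-(1 / 2 : ℝ) • (𝐞 1 + 𝐞 3)) + t ^ 2 • (0 : ℝ⁵) + t ^ 3 • (𝐞 2 + 𝐞 4) := by
  ext i; fin_cases i <;> simp [curveC] <;> ring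

theorem stmt13_general (δ₁ δ₂ δ₃ : ℝ → EuclideanSpace ℝ (Fin 5))
    (hδn : ∀ t ∈ Set.Icc (0 : ℝ) 1, ‖δ₁ t‖ ≤ t ^ 3 ∧ ‖δ₂ t‖ ≤ t ^ 3 ∧ ‖δ₃ t‖ ≤ t ^ 3) :
    ¬ ∃ P : EuclideanSpace ℝ (Fin 5) →ₗ[ℝ] EuclideanSpace ℝ (Fin 5),
      (∀ v, P (P v) = P v) ∧
      (⇑P '' Fcone = Fcone) ∧
      (∀ v, (P v) 3 = 0 ∧ (P v) 4 = 0) ∧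
      (∀ t ∈ Set.Icc (0 : ℝ) 1,
        P (curveA t + δ₁ t) ∈ Fcone ∧ P (curveB t + δ₂ t) ∈ Fcone ∧
        P (curveC t + δ₃ t) ∈ Fcone) := by
  rintro ⟨P, hidem, hPF, -, hcur⟩
  obtain ⟨h0, h1, h2⟩ := apply_single_eq_of_eqOn_Fcone (eqOn_of_idempotent_of_image_eq hidem hPF)
  have hA := expansion_conditions_of_map_mem_Fcone h0 curveA_eq
    (isBigO_pow_of_norm_le fun t ht => (hδn t ht).1) fun t ht => (hcur t ht).1
  have hB := expansion_conditions_of_map_mem_Fcone h0 curveB_eq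
    (isBigO_pow_of_norm_le fun t ht => (hδn t ht).2.1) fun t ht => (hcur t ht).2.1
  have hC := expansion_conditions_of_map_mem_Fcone h0 curveC_eq
    (isBigO_pow_of_norm_le fun t ht => (hδn t ht).2.2) fun t ht => (hcur t ht).2.2
  simp only [map_smul, map_sub, map_add, map_zero, h1, h2, PiLp.smul_apply, PiLp.sub_apply,
    PiLp.add_apply, PiLp.zero_apply, PiLp.single_apply, smul_eq_mul, Fin.reduceEq, if_true,
    if_false, mul_zero] at hA hB hC
  have ha : P (𝐞 3) 2 = 0 := le_antisymm (by linarith [hB.1]) hA.1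
  have hB' := hB.2 (by rw [ha]; ring)
  have hC' := hC.2 (by rw [ha]; ring)
  nlinarith

/-- Proposition 4.2: with perturbations `δᵢ : [0,1] → {0} × ℝ⁴` satisfying `‖δᵢ(t)‖ ≤ t³`,
there is no idempotent linear `P : ℝ⁵ → ℝ⁵` with `P(F) = F`, `P(ℝ⁵) ⊆ span F = ℝ³×{(0,0)}`,
and `P(α(t)+δ₁(t)), P(β(t)+δ₂(t)), P(γ(t)+δ₃(t)) ∈ F` for all `t ∈ [0,1]`. -/
theorem stmt13 (δ₁ δ₂ δ₃ : ℝ → EuclideanSpace ℝ (Fin 5))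
    (hδ0 : ∀ t ∈ Set.Icc (0 : ℝ) 1, (δ₁ t) 0 = 0 ∧ (δ₂ t) 0 = 0 ∧ (δ₃ t) 0 = 0)
    (hδn : ∀ t ∈ Set.Icc (0 : ℝ) 1, ‖δ₁ t‖ ≤ t ^ 3 ∧ ‖δ₂ t‖ ≤ t ^ 3 ∧ ‖δ₃ t‖ ≤ t ^ 3) :
    ¬ ∃ P : EuclideanSpace ℝ (Fin 5) →ₗ[ℝ] EuclideanSpace ℝ (Fin 5),
      (∀ v, P (P v) = P v) ∧
      (⇑P '' Fcone = Fcone) ∧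
      (∀ v, (P v) 3 = 0 ∧ (P v) 4 = 0) ∧
      (∀ t ∈ Set.Icc (0 : ℝ) 1,
        P (curveA t + δ₁ t) ∈ Fcone ∧ P (curveB t + δ₂ t) ∈ Fcone ∧
        P (curveC t + δ₃ t) ∈ Fcone) :=
  stmt13_general δ₁ δ₂ δ₃ hδn
end
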